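/- Let u = Σ_{d=0}^∞ K^d v be the Neumann series solution with v(t) = e^{tA} u₀, and let u^{[n]} = Σ_{d=0}^n K^d v be its n-th partial sum. Then ‖u − u^{[n]}‖_∞ ≤ C_h e^{h C_h ‖B‖} (h C_h ‖B‖)^{n+1} / (n+1)! · ‖u₀‖. -/

import Mathlib

/-- The Volterra-type integral operator `(K u)(t) = ∫₀ᵗ e^{(t−s)A} B(s) u(s) ds`. -/
noncomputable def Kop {X : Type*} [NormedAddCommGroup X] [NormedSpace ℝ X]
    (e B : ℝ → X →L[ℝ] X) (u : ℝ → X) : ℝ → X :=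
  fun t => ∫ s in (0 : ℝ)..t, (e (t - s)) ((B s) (u s))

set_option maxHeartbeats 1000000 in
theorem stmt7 {X : Type*} [NormedAddCommGroup X] [NormedSpace ℝ X] [CompleteSpace X]
    (h Ch Bnorm : ℝ) (hh : 0 < h) (e B : ℝ → X →L[ℝ] X)
    (he : ∀ x : X, Continuous fun t => e t x) (he0 : e 0 = ContinuousLinearMap.id ℝ X)
    (hCh : ∀ t ∈ Set.Icc (0 : ℝ) h, ‖e t‖ ≤ Ch)
    (hB : Continuous B) (hBnorm : ∀ s ∈ Set.Icc (0 : ℝ) h, ‖B s‖ ≤ Bnorm)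
    (u₀ : X) (v : ℝ → X) (hv : v = fun t => e t u₀)
    (u : ℝ → X) (hu : u = fun t => ∑' d : ℕ, ((Kop e B)^[d] v) t) :
    ∀ (n : ℕ), ∀ t ∈ Set.Icc (0 : ℝ) h,
      ‖u t - ∑ d ∈ Finset.range (n + 1), ((Kop e B)^[d] v) t‖ ≤
        Ch * Real.exp (h * Ch * Bnorm) * (h * Ch * Bnorm) ^ (n + 1)
          / (Nat.factorial (n + 1)) * ‖u₀‖ := by
  have h0h : (0 : ℝ) ∈ Set.Icc (0 : ℝ) h := ⟨le_refl _, hh.le⟩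
  have hCh0 : 0 ≤ Ch := le_trans (norm_nonneg _) (hCh 0 h0h)
  have hB0 : 0 ≤ Bnorm := le_trans (norm_nonneg _) (hBnorm 0 h0h)
  -- key inductive bound
  have key : ∀ d : ℕ, ∀ t ∈ Set.Icc (0 : ℝ) h,
      ‖((Kop e B)^[d] v) t‖ ≤ Ch * ‖u₀‖ * (Ch * Bnorm * t) ^ d / d.factorial := by
    intro d
    induction d with
    | zero =>
      intro t ht
      simp only [Function.iterate_zero, id_eq, hv, pow_zero, Nat.factorial_zero,
        Nat.cast_one, mul_one, div_one]
      calc ‖e t u₀‖ ≤ ‖e t‖ * ‖u₀‖ := (e t).le_opNorm u₀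
        _ ≤ Ch * ‖u₀‖ := mul_le_mul_of_nonneg_right (hCh t ht) (norm_nonneg _)
    | succ d ih =>
      intro t ht
      rw [Function.iterate_succ_apply']
      have hbound : ∀ᵐ s ∂(MeasureTheory.volume.restrict (Set.uIoc (0:ℝ) t)),
          ‖(e (t - s)) ((B s) (((Kop e B)^[d] v) s))‖ ≤
            Ch * Bnorm * (Ch * ‖u₀‖ * (Ch * Bnorm * s) ^ d / d.factorial) := by
        refine MeasureTheory.ae_restrict_of_forall_mem measurableSet_uIoc ?_
        intro s hs
        rw [Set.uIoc_of_le ht.1] at hs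
        have hsIcc : s ∈ Set.Icc (0:ℝ) h := ⟨hs.1.le, hs.2.trans ht.2⟩
        have hts : t - s ∈ Set.Icc (0:ℝ) h := ⟨by linarith [hs.2], by linarith [hs.1, ht.2]⟩
        calc ‖(e (t - s)) ((B s) (((Kop e B)^[d] v) s))‖
            ≤ ‖e (t - s)‖ * ‖(B s) (((Kop e B)^[d] v) s)‖ := (e (t-s)).le_opNorm _
          _ ≤ ‖e (t - s)‖ * (‖B s‖ * ‖((Kop e B)^[d] v) s‖) :=
              mul_le_mul_of_nonneg_left ((B s).le_opNorm _) (norm_nonneg _)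
          _ ≤ Ch * (Bnorm * (Ch * ‖u₀‖ * (Ch * Bnorm * s) ^ d / d.factorial)) := by
              apply mul_le_mul (hCh _ hts)
              · apply mul_le_mul (hBnorm _ hsIcc) (ih s hsIcc) (norm_nonneg _) hB0
              · positivity
              · exact hCh0
          _ = Ch * Bnorm * (Ch * ‖u₀‖ * (Ch * Bnorm * s) ^ d / d.factorial) := by ring
      have hint : IntervalIntegrable
          (fun s => Ch * Bnorm * (Ch * ‖u₀‖ * (Ch * Bnorm * s) ^ d / d.factorial))
          MeasureTheory.volume 0 t := by
        apply Continuous.intervalIntegrable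
        fun_prop
      have := intervalIntegral.norm_integral_le_abs_of_norm_le hbound hint
      refine le_trans this ?_
      have hval : (∫ s in (0:ℝ)..t,
          Ch * Bnorm * (Ch * ‖u₀‖ * (Ch * Bnorm * s) ^ d / d.factorial)) =
          Ch * ‖u₀‖ * (Ch * Bnorm * t) ^ (d+1) / (d+1).factorial := by
        have : ∀ s : ℝ, Ch * Bnorm * (Ch * ‖u₀‖ * (Ch * Bnorm * s) ^ d / d.factorial) =
            (Ch * ‖u₀‖ * (Ch * Bnorm) ^ (d+1) / d.factorial) * s ^ d := by
          intro s; rw [mul_pow]; ring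
        simp_rw [this]
        rw [intervalIntegral.integral_const_mul, integral_pow]
        rw [Nat.factorial_succ, mul_pow]
        push_cast
        field_simp
        ring
      have hnn : 0 ≤ Ch * ‖u₀‖ * (Ch * Bnorm * t) ^ (d+1) / (d+1).factorial :=
        div_nonneg (mul_nonneg (by positivity)
          (pow_nonneg (mul_nonneg (mul_nonneg hCh0 hB0) ht.1) _)) (by positivity)
      rw [hval, abs_of_nonneg hnn]
  intro n t ht
  set x : ℝ := h * Ch * Bnorm with hx
  have hx0 : 0 ≤ x := by positivity
  -- uniform bound on [0,h]
  have keyh : ∀ d : ℕ, ‖((Kop e B)^[d] v) t‖ ≤ Ch * ‖u₀‖ * x ^ d / d.factorial := by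
    intro d
    refine le_trans (key d t ht) ?_
    have hle : (Ch * Bnorm * t) ^ d ≤ x ^ d := by
      apply pow_le_pow_left₀ (mul_nonneg (mul_nonneg hCh0 hB0) ht.1)
      rw [hx]; nlinarith [ht.2, hCh0, hB0, ht.1]
    gcongr
  have hsum_bound : Summable (fun d : ℕ => Ch * ‖u₀‖ * x ^ d / d.factorial) := by
    simp_rw [mul_div_assoc]
    exact (Real.summable_pow_div_factorial x).mul_left _
  have hsum : Summable (fun d : ℕ => ((Kop e B)^[d] v) t) := by
    apply Summable.of_norm_bounded hsum_bound keyh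
  have htail := Summable.sum_add_tsum_nat_add (n + 1) hsum
  rw [hu]
  have heq : (∑' d : ℕ, ((Kop e B)^[d] v) t) - ∑ d ∈ Finset.range (n + 1), ((Kop e B)^[d] v) t
      = ∑' k : ℕ, ((Kop e B)^[k + (n+1)] v) t := by
    rw [← htail]; abel
  rw [heq]
  have hsum_shift : Summable (fun k : ℕ => ((Kop e B)^[k + (n+1)] v) t) :=
    (summable_nat_add_iff (n+1)).mpr hsum
  have hnorm_sum : Summable (fun k : ℕ => ‖((Kop e B)^[k + (n+1)] v) t‖) :=
    Summable.of_nonneg_of_le (fun k => norm_nonneg _) (fun k => keyh (k + (n+1)))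
      ((summable_nat_add_iff (n+1)).mpr hsum_bound)
  have hsum_bshift : Summable (fun k : ℕ =>
      (Ch * ‖u₀‖ * x ^ (n+1) / (n+1).factorial) * (x ^ k / k.factorial)) :=
    (Real.summable_pow_div_factorial x).mul_left _
  calc ‖∑' k : ℕ, ((Kop e B)^[k + (n+1)] v) t‖
      ≤ ∑' k : ℕ, ‖((Kop e B)^[k + (n+1)] v) t‖ := norm_tsum_le_tsum_norm hnorm_sum
    _ ≤ ∑' k : ℕ, (Ch * ‖u₀‖ * x ^ (n+1) / (n+1).factorial) * (x ^ k / k.factorial) := by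
        apply Summable.tsum_le_tsum _ hnorm_sum hsum_bshift
        intro k
        refine le_trans (keyh (k + (n+1))) ?_
        have hfacn : (n+1).factorial * k.factorial ≤ (k + (n+1)).factorial := by
          rw [Nat.add_comm k (n+1)]
          exact Nat.le_of_dvd (Nat.factorial_pos _)
            (Nat.factorial_mul_factorial_dvd_factorial_add (n+1) k)
        have hfac : ((n+1).factorial : ℝ) * k.factorial ≤ ((k + (n+1)).factorial : ℝ) := by
          exact_mod_cast hfacn
        have h1 : (0:ℝ) < ((n+1).factorial : ℝ) * k.factorial := by positivity
        have hstep : Ch * ‖u₀‖ * x ^ (k + (n+1)) / ((k + (n+1)).factorial : ℝ) ≤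
            Ch * ‖u₀‖ * x ^ (k + (n+1)) / (((n+1).factorial : ℝ) * k.factorial) :=
          div_le_div_of_nonneg_left (by positivity) h1 hfac
        refine hstep.trans_eq ?_
        have hF1 : ((n+1).factorial : ℝ) ≠ 0 := by positivity
        have hF2 : ((k.factorial : ℕ) : ℝ) ≠ 0 := by positivity
        rw [pow_add]
        field_simp
    _ = (Ch * ‖u₀‖ * x ^ (n+1) / (n+1).factorial) * ∑' k : ℕ, (x ^ k / k.factorial) := by
        rw [tsum_mul_left]
    _ = (Ch * ‖u₀‖ * x ^ (n+1) / (n+1).factorial) * Real.exp x := by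
        congr 1
        rw [Real.exp_eq_exp_ℝ, NormedSpace.exp_eq_tsum_div]
    _ = Ch * Real.exp x * x ^ (n+1) / (n+1).factorial * ‖u₀‖ := by ring
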